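/- arXiv:2510.19449 — 2 statements merged into one kernel-verified Lean document; each statement's English description precedes it below -/
import Mathlib

section
/- Let p be an odd prime and let c : ℕ → 𝔽_p be the p-Cantor sequence. Then in the formal power series ring 𝔽_p[[X]], one has (∑_{i≥0} c(i)·X^i)² · (1 + X²) = 1. (That is, the Laurent series of the p-Cantor sequence equals (1 + t^{−2})^{−1/2}.) -/
/-!
Write `F = ∑ c(n) Xⁿ` and `A = (1 + X²)^((p-1)/2)`, whose coefficient of `Xⁱ` is `C(p₂, i/2)` for
even `i` and vanishes for `i ≥ p`. The recursion for `c` says exactly that `F = A · F(X^p)`, and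
over `𝔽_p` one has `F(X^p) = F^p`. Hence `G = F² (1 + X²)` satisfies
`G^p = A² (1 + X²) · F^{2p} = (1 + X²)^p F^{2p} = G`, i.e. `G(X^p) = G`. A power series fixed by
`X ↦ X^p` with `p > 1` is constant, and `G(0) = c(0)² = 1`.
-/

namespace PowerSeries

variable {R : Type*} [CommRing R]

theorem expand_eq_pow_of_zmod (p : ℕ) [Fact p.Prime] (F : (ZMod p)⟦X⟧) :
    expand p (Fact.out : p.Prime).ne_zero F = F ^ p := by
  have h := MvPowerSeries.map_frobenius_expand p (Fact.out : p.Prime).ne_zero (f := F)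
  rwa [ZMod.frobenius_zmod, MvPowerSeries.map_id] at h

theorem coeff_one_add_X_sq_pow (m i : ℕ) :
    coeff i ((1 + X ^ 2 : R⟦X⟧) ^ m) = if 2 ∣ i then (m.choose (i / 2) : R) else 0 := by
  have h : (1 + X ^ 2 : R⟦X⟧) ^ m =
      expand 2 two_ne_zero (((1 + Polynomial.X) ^ m : Polynomial R) : R⟦X⟧) := by
    simp [expand_X]
  rw [h, coeff_expand, Polynomial.coeff_coe, Polynomial.coeff_one_add_X_pow]

theorem coeff_mul_expand_add {p : ℕ} (hp : p ≠ 0) {A : R⟦X⟧} (hA : ∀ i, p ≤ i → coeff i A = 0)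
    (G : R⟦X⟧) {n i : ℕ} (hi : i < p) :
    coeff (p * n + i) (A * expand p hp G) = coeff i A * coeff n G := by
  rw [coeff_mul, Finset.sum_eq_single (i, p * n)]
  · rw [coeff_expand_mul]
  · rintro ⟨a, b⟩ hab hne
    rw [Finset.HasAntidiagonal.mem_antidiagonal] at hab
    by_cases ha : p ≤ a
    · rw [hA a ha, zero_mul]
    by_cases hb : p ∣ b
    · obtain ⟨m, rfl⟩ := hb
      have hai : a = i := by
        simpa [Nat.add_mul_mod_self_left, Nat.mod_eq_of_lt hi, Nat.mod_eq_of_lt (not_le.mp ha)]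
          using congrArg (· % p) hab
      subst hai
      obtain rfl : m = n := Nat.eq_of_mul_eq_mul_left (Nat.pos_of_ne_zero hp) (by omega)
      exact absurd rfl hne
    · rw [coeff_expand_of_not_dvd p hp G hb, mul_zero]
  · exact fun h => absurd (Finset.HasAntidiagonal.mem_antidiagonal.mpr (add_comm _ _)) h

theorem eq_C_of_expand_eq_self {p : ℕ} (hp : p ≠ 0) (hp1 : p ≠ 1) {G : R⟦X⟧}
    (hG : expand p hp G = G) : G = C (constantCoeff G) := by
  set H := G - C (constantCoeff G)
  have hH : expand p hp H = H := by rw [map_sub, hG, expand_C]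
  suffices H = 0 from sub_eq_zero.mp this
  by_contra hne
  obtain ⟨k, hk⟩ := ENat.ne_top_iff_exists.mp (order_eq_top.not.mpr hne)
  have hk0 : k ≠ 0 := by
    rintro rfl
    exact order_ne_zero_iff_constCoeff_eq_zero.mpr (by simp [H]) hk.symm
  have hpk : (k : ℕ∞) = p * k := by rw [← nsmul_eq_mul, hk, ← order_expand p hp H, hH]
  norm_cast at hpk
  exact hp1 (Nat.eq_of_mul_eq_mul_right (Nat.pos_of_ne_zero hk0) (by omega))

end PowerSeries

open PowerSeries

/-- the square of the power series of the p-Cantor sequence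
times (1 + X²) equals 1 in 𝔽_p[[X]]. -/
theorem cantor_series_sq (p : ℕ) (hp : p.Prime) (hodd : Odd p)
    (c : ℕ → ZMod p)
    (hc0 : c 0 = 1)
    (hc : ∀ n i : ℕ, i < p →
      c (p * n + i) =
        (if i % 2 = 0 then ((((p - 1) / 2).choose (i / 2) : ℕ) : ZMod p) else 0) * c n) :
    (PowerSeries.mk c) ^ 2 * (1 + PowerSeries.X ^ 2) = 1 := by
  have := Fact.mk hp
  obtain ⟨k, hk⟩ := hodd
  set A : (ZMod p)⟦X⟧ := (1 + X ^ 2) ^ ((p - 1) / 2)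
  have hA : ∀ i, coeff i A = if i % 2 = 0 then ((((p - 1) / 2).choose (i / 2) : ℕ) : ZMod p)
      else 0 := fun i => by simp only [A, coeff_one_add_X_sq_pow, Nat.dvd_iff_mod_eq_zero]
  have hA_deg : ∀ i, p ≤ i → coeff i A = 0 := fun i hi => by
    rw [hA]
    split_ifs with h_even
    · rw [Nat.choose_eq_zero_of_lt (by omega), Nat.cast_zero]
    · rfl
  have hF : mk c = A * mk c ^ p := by
    ext n
    have hn := Nat.mod_lt n hp.pos
    rw [← expand_eq_pow_of_zmod, ← Nat.div_add_mod n p, coeff_mul_expand_add _ hA_deg _ hn,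
      coeff_mk, coeff_mk, hc _ _ hn, hA]
  have hA_sq : A ^ 2 * (1 + X ^ 2) = (1 + X ^ 2) ^ p := by
    rw [← pow_mul, ← pow_succ]; congr 1; omega
  have hG : expand p hp.ne_zero (mk c ^ 2 * (1 + X ^ 2)) = mk c ^ 2 * (1 + X ^ 2) := by
    rw [expand_eq_pow_of_zmod]
    calc (mk c ^ 2 * (1 + X ^ 2)) ^ p
        _ = (1 + X ^ 2) ^ p * (mk c ^ p) ^ 2 := by
          rw [mul_pow, mul_comm, ← pow_mul, ← pow_mul, mul_comm p 2]
        _ = (A * mk c ^ p) ^ 2 * (1 + X ^ 2) := by rw [← hA_sq]; ring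
        _ = mk c ^ 2 * (1 + X ^ 2) := by rw [← hF]
  rw [eq_C_of_expand_eq_self hp.ne_zero hp.ne_one hG]
  simp [hc0]
end

section
/- Let p be an odd prime and let s : ℕ → 𝔽_p be the p-Singer sequence. Then in the formal power series ring 𝔽_p[[X]], one has (∑_{i≥0} s(i)·X^i)² = 1 + X². (That is, the Laurent series of the p-Singer sequence equals (1 + t^{−2})^{1/2}.) -/
/-!
Write `F = ∑ σ(n) Xⁿ`. The recursion for `σ` says `F = (1 + X)^((p-1)/2) · F(X^p)`, and the one
for `s` says `∑ s(n) Xⁿ = G(X²)` with `G = (1 + X) · F`. Since `(1 + X)^p = 1 + X^p` in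
characteristic `p`, the series `(1 + X) · F²` is invariant under `X ↦ X^p`, hence constant, so
`G² = (1 + X) · ((1 + X) · F²) = 1 + X`; substituting `X²` gives the claim.
-/

open PowerSeries

namespace PowerSeries

variable {R : Type*} [CommRing R]

instance instCharP (p : ℕ) [CharP R p] : CharP R⟦X⟧ p :=
  charP_of_injective_ringHom C_injective p

theorem coeff_one_add_X_pow (m n : ℕ) : coeff n ((1 + X : R⟦X⟧) ^ m) = m.choose n := by
  simpa using (Polynomial.coeff_coe ((1 + Polynomial.X : Polynomial R) ^ m) n).trans
    (Polynomial.coeff_one_add_X_pow R m n)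

theorem expand_one_add_X (k : ℕ) (hk : k ≠ 0) : expand k hk (1 + X : R⟦X⟧) = 1 + X ^ k := by
  simp

theorem coeff_one_add_X_pow_pow (k : ℕ) (hk : k ≠ 0) (m n : ℕ) :
    coeff n ((1 + X ^ k : R⟦X⟧) ^ m) = if k ∣ n then (m.choose (n / k) : R) else 0 := by
  rw [← expand_one_add_X k hk, ← map_pow, coeff_expand, coeff_one_add_X_pow]

theorem eq_C_constantCoeff_of_expand_eq_self {k : ℕ} (hk : k ≠ 0) (hk1 : k ≠ 1) {f : R⟦X⟧}
    (h : expand k hk f = f) : f = C (constantCoeff f) := by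
  set g := f - C (constantCoeff f)
  by_contra hne
  have hfin : g.order ≠ ⊤ := order_eq_top.not.mpr (sub_ne_zero.mpr hne)
  have hpos : g.order ≠ 0 := order_ne_zero_iff_constCoeff_eq_zero.mpr (by simp [g])
  have hmul : g.order = k • g.order := by
    rw [← order_expand k hk]; simp [g, h, expand_C]
  generalize g.order = d at hfin hpos hmul
  lift d to ℕ using hfin
  rw [nsmul_eq_mul] at hmul
  norm_cast at hpos hmul
  exact hk1 (by simpa [hpos] using hmul)

theorem mk_eq_mul_expand {k : ℕ} (hk : k ≠ 0) {a b : ℕ → R} {c : R⟦X⟧}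
    (hc : ∀ i, k ≤ i → coeff i c = 0) (habc : ∀ n i, i < k → a (k * n + i) = coeff i c * b n) :
    mk a = c * expand k hk (mk b) := by
  ext n
  rw [coeff_mk, coeff_mul, Finset.sum_eq_single (n % k, k * (n / k))]
  · rw [coeff_expand_mul, coeff_mk, ← habc _ _ (Nat.mod_lt n (Nat.pos_of_ne_zero hk)),
      Nat.div_add_mod]
  · rintro ⟨i, j⟩ hij hne
    rw [Finset.HasAntidiagonal.mem_antidiagonal] at hij
    by_cases hi : k ≤ i
    · rw [hc i hi, zero_mul]
    rw [coeff_expand, if_neg, mul_zero]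
    rintro ⟨t, rfl⟩
    refine hne (Prod.ext ?_ ?_)
    · simp [← hij, Nat.add_mul_mod_self_left, Nat.mod_eq_of_lt (not_le.mp hi)]
    · simp [← hij, Nat.add_mul_div_left _ _ (Nat.pos_of_ne_zero hk),
        Nat.div_eq_of_lt (not_le.mp hi)]
  · intro h
    exact (h (Finset.HasAntidiagonal.mem_antidiagonal.mpr (by rw [add_comm, Nat.div_add_mod]))).elim

theorem mk_eq_one_add_X_pow_mul_expand {k m : ℕ} (hk : k ≠ 0) (hm : m < k) {a b : ℕ → R}
    (h : ∀ n i, i < k → a (k * n + i) = (m.choose i : R) * b n) :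
    mk a = (1 + X) ^ m * expand k hk (mk b) :=
  mk_eq_mul_expand hk
    (fun i hi => by rw [coeff_one_add_X_pow, Nat.choose_eq_zero_of_lt (by omega), Nat.cast_zero])
    (fun n i hi => by rw [coeff_one_add_X_pow, h n i hi])

theorem mk_eq_one_add_X_sq_pow_mul_expand {k m : ℕ} (hk : k ≠ 0) (hm : m < k) {a b : ℕ → R}
    (h : ∀ n i, i < 2 * k →
      a (2 * k * n + i) = (if i % 2 = 0 then (m.choose (i / 2) : R) else 0) * b n) :
    mk a = (1 + X ^ 2) ^ m * expand (2 * k) (mul_ne_zero two_ne_zero hk) (mk b) := by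
  refine mk_eq_mul_expand _ (fun i hi => ?_) (fun n i hi => ?_) <;>
    simp only [coeff_one_add_X_pow_pow 2 two_ne_zero, Nat.dvd_iff_mod_eq_zero]
  · split_ifs
    · rw [Nat.choose_eq_zero_of_lt (by omega), Nat.cast_zero]
    · rfl
  · exact h n i hi

theorem one_add_X_mul_sq_eq_one {p : ℕ} [CharP R p] (hp : p.Prime) (hodd : Odd p) {F : R⟦X⟧}
    (hF : F = (1 + X) ^ ((p - 1) / 2) * expand p hp.ne_zero F) (h0 : constantCoeff F = 1) :
    (1 + X) * F ^ 2 = 1 := by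
  have := Fact.mk hp
  have hp₂ : 2 * ((p - 1) / 2) + 1 = p := by obtain ⟨k, rfl⟩ := hodd; omega
  set G := (1 + X) * F ^ 2 with hG
  have hfix : expand p hp.ne_zero G = G := calc
    expand p hp.ne_zero G = (1 + X) ^ p * expand p hp.ne_zero F ^ 2 := by
      rw [hG, map_mul, map_pow, expand_one_add_X, add_pow_char, one_pow]
    _ = (1 + X) ^ (2 * ((p - 1) / 2) + 1) * expand p hp.ne_zero F ^ 2 := by rw [hp₂]
    _ = (1 + X) * ((1 + X) ^ ((p - 1) / 2) * expand p hp.ne_zero F) ^ 2 := by ring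
    _ = G := by rw [← hF]
  rw [eq_C_constantCoeff_of_expand_eq_self hp.ne_zero hp.one_lt.ne' hfix, hG]
  simp [h0]

end PowerSeries

/-- the square of the power series of the p-Singer sequence
equals 1 + X² in 𝔽_p[[X]]. -/
theorem singer_series_sq (p : ℕ) (hp : p.Prime) (hodd : Odd p)
    (σ s : ℕ → ZMod p)
    (hσ0 : σ 0 = 1)
    (hσ : ∀ n i : ℕ, i < p →
      σ (p * n + i) = ((((p - 1) / 2).choose i : ℕ) : ZMod p) * σ n)
    (hs : ∀ n i : ℕ, i < 2 * p →
      s (2 * p * n + i) =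
        (if i % 2 = 0 then ((((p - 1) / 2 + 1).choose (i / 2) : ℕ) : ZMod p) else 0) * σ n) :
    (PowerSeries.mk s) ^ 2 = 1 + PowerSeries.X ^ 2 := by
  have hp₃ : 3 ≤ p := by obtain ⟨k, rfl⟩ := hodd; have := hp.two_le; omega
  have hσ' := mk_eq_one_add_X_pow_mul_expand hp.ne_zero (by omega) hσ
  have hsq := one_add_X_mul_sq_eq_one hp hodd hσ'
    (by rw [← coeff_zero_eq_constantCoeff_apply, coeff_mk, hσ0])
  have hs' : mk s = expand 2 two_ne_zero ((1 + X) * mk σ) := by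
    rw [mk_eq_one_add_X_sq_pow_mul_expand hp.ne_zero (by omega) hs,
      expand_mul 2 two_ne_zero p hp.ne_zero, ← expand_one_add_X, ← map_pow, ← map_mul, pow_succ',
      mul_assoc, ← hσ']
  calc mk s ^ 2 = expand 2 two_ne_zero ((1 + X) * ((1 + X) * mk σ ^ 2)) := by
        rw [hs', ← map_pow]; ring_nf
    _ = 1 + X ^ 2 := by rw [hsq, mul_one, expand_one_add_X]
end
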